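/- Let (X,d) be a Q-metric space over a continuous quantale, with robust topology τ_{d,R} on the powerset of X. For A, B ⊆ X, A is below B in the specialization preorder of τ_{d,R} if and only if B ⊆ cl°(A), the closure of A in the dual open ball topology. -/
import Mathlib


def wayBelow {Q : Type*} [CompleteLattice Q] (x y : Q) : Prop :=
  ∀ D : Set Q, D.Nonempty → DirectedOn (· ≤ ·) D → y ≤ sSup D → ∃ d ∈ D, x ≤ d

def ContinuousLattice (Q : Type*) [CompleteLattice Q] : Prop :=
  ∀ y : Q, y = sSup {x : Q | wayBelow x y}

/-- The set of points belonging to `A` with precision greater than `δ`. -/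
def BR {Q : Type*} [CompleteLattice Q] {X : Type*} (d : X → X → Q) (A : Set X) (δ : Q) :
    Set X := {y : X | ∃ x ∈ A, wayBelow δ (d x y)}

/-- Closure of  in the dual open ball topology. -/
def dualClosure {Q : Type*} [Monoid Q] [CompleteLattice Q] {X : Type*} (d : X → X → Q)
    (A : Set X) : Set X :=
  {y : X | ∀ ε : Q, wayBelow ε (1 : Q) → ∃ x ∈ A, wayBelow ε (d x y)}

/-- Openness in the robust topology on the powerset of X. -/
def RobustOpen {Q : Type*} [Monoid Q] [CompleteLattice Q] {X : Type*} (d : X → X → Q)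
    (U : Set (Set X)) : Prop :=
  ∀ A ∈ U, ∃ δ : Q, wayBelow δ (1 : Q) ∧ {B : Set X | B ⊆ BR d A δ} ⊆ U

section Aux

variable {Q : Type*} [CompleteLattice Q]

lemma wayBelow_bot (y : Q) : wayBelow ⊥ y :=
  fun _ hne _ _ => hne.imp fun d hd => ⟨hd, bot_le⟩

lemma wayBelow.le {a b : Q} (h : wayBelow a b) : a ≤ b := by
  obtain ⟨d, hd, hle⟩ := h {b} ⟨b, rfl⟩
    (fun x hx y hy => ⟨b, rfl, by simp_all, by simp_all⟩) (by simp)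
  simp_all

lemma le_wayBelow {a b c : Q} (hab : a ≤ b) (h : wayBelow b c) : wayBelow a c :=
  fun D h1 h2 h3 => (h D h1 h2 h3).imp fun d hd => ⟨hd.1, hab.trans hd.2⟩

lemma wayBelow_le {a b c : Q} (h : wayBelow a b) (hbc : b ≤ c) : wayBelow a c :=
  fun D h1 h2 h3 => h D h1 h2 (hbc.trans h3)

lemma wayBelow_sup {a b c : Q} (ha : wayBelow a c) (hb : wayBelow b c) :
    wayBelow (a ⊔ b) c := by
  intro D h1 h2 h3
  obtain ⟨d1, hd1, h1'⟩ := ha D h1 h2 h3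
  obtain ⟨d2, hd2, h2'⟩ := hb D h1 h2 h3
  obtain ⟨e, he, he1, he2⟩ := h2 d1 hd1 d2 hd2
  exact ⟨e, he, sup_le (h1'.trans he1) (h2'.trans he2)⟩

/-- Interpolation property of continuous lattices. -/
lemma wayBelow_interp (hcont : ContinuousLattice Q) {a y : Q} (h : wayBelow a y) :
    ∃ c, wayBelow a c ∧ wayBelow c y := by
  have hne : Set.Nonempty {x : Q | ∃ c, wayBelow x c ∧ wayBelow c y} :=
    ⟨⊥, ⊥, wayBelow_bot _, wayBelow_bot _⟩
  have hdir : DirectedOn (· ≤ ·) {x : Q | ∃ c, wayBelow x c ∧ wayBelow c y} := by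
    rintro x1 ⟨c1, h1, h1'⟩ x2 ⟨c2, h2, h2'⟩
    exact ⟨x1 ⊔ x2, ⟨c1 ⊔ c2,
      wayBelow_sup (wayBelow_le h1 le_sup_left) (wayBelow_le h2 le_sup_right),
      wayBelow_sup h1' h2'⟩, le_sup_left, le_sup_right⟩
  have hle : y ≤ sSup {x : Q | ∃ c, wayBelow x c ∧ wayBelow c y} := by
    conv_lhs => rw [hcont y]
    apply sSup_le
    intro c hc
    calc c = sSup {x : Q | wayBelow x c} := hcont c
    _ ≤ _ := sSup_le_sSup fun x hx => show ∃ c', wayBelow x c' ∧ wayBelow c' y from ⟨c, hx, hc⟩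
  obtain ⟨x, ⟨c, hxc, hcy⟩, hax⟩ := h _ hne hdir hle
  exact ⟨c, le_wayBelow hax hxc, hcy⟩

/-- In a quantale, way-below elements of `η` can be pushed under multiplication by
elements way below `1`. -/
lemma wayBelow_mul_approx {Q : Type*} [Monoid Q] [CompleteLattice Q] [IsQuantale Q]
    (hcont : ContinuousLattice Q) {a η : Q} (h : wayBelow a η) :
    ∃ δ : Q, wayBelow δ 1 ∧ a ≤ η * δ := by
  have hne : Set.Nonempty ((η * ·) '' {δ : Q | wayBelow δ 1}) :=
    ⟨η * ⊥, ⊥, wayBelow_bot _, rfl⟩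
  have hdir : DirectedOn (· ≤ ·) ((η * ·) '' {δ : Q | wayBelow δ 1}) := by
    rintro _ ⟨d1, hd1, rfl⟩ _ ⟨d2, hd2, rfl⟩
    exact ⟨η * (d1 ⊔ d2), ⟨d1 ⊔ d2, wayBelow_sup hd1 hd2, rfl⟩,
      mul_le_mul_right le_sup_left η, mul_le_mul_right le_sup_right η⟩
  have hle : η ≤ sSup ((η * ·) '' {δ : Q | wayBelow δ 1}) := by
    have : η * sSup {δ : Q | wayBelow δ 1} = sSup ((η * ·) '' {δ : Q | wayBelow δ 1}) := by
      rw [IsQuantale.mul_sSup_distrib, sSup_image]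
    have heq : η = sSup ((η * ·) '' {δ : Q | wayBelow δ 1}) := by
      rw [← this, ← hcont 1, mul_one]
    exact heq.le
  obtain ⟨_, ⟨δ, hδ, rfl⟩, hle'⟩ := h _ hne hdir hle
  exact ⟨δ, hδ, hle'⟩

end Aux

theorem robust_specialization {Q : Type*} [Monoid Q] [CompleteLattice Q] [IsQuantale Q]
    (hcont : ContinuousLattice Q) {X : Type*} (d : X → X → Q)
    (hrefl : ∀ x : X, (1 : Q) ≤ d x x)
    (htri : ∀ x y z : X, d x y * d y z ≤ d x z) (A B : Set X) :
    (∀ U : Set (Set X), RobustOpen d U → A ∈ U → B ∈ U) ↔ B ⊆ dualClosure d A := by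
  constructor
  · intro hspec y hyB ε hε
    -- the open set of all C contained in some BR(A, η) with ε ≪ η ≪ 1
    set U : Set (Set X) :=
      {C | ∃ η : Q, wayBelow ε η ∧ wayBelow η 1 ∧ C ⊆ BR d A η} with hU
    have hopen : RobustOpen d U := by
      rintro C ⟨η, hεη, hη1, hCsub⟩
      -- interpolate ε ≪ ε' ≪ η, then find δ ≪ 1 with ε' ≤ η * δ
      obtain ⟨ε', hεε', hε'η⟩ := wayBelow_interp hcont hεη
      obtain ⟨δ, hδ1, hε'ηδ⟩ := wayBelow_mul_approx hcont hε'η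
      have hεηδ : wayBelow ε (η * δ) := le_wayBelow (le_refl ε) (wayBelow_le hεε' hε'ηδ)
      -- interpolate ε ≪ η' ≪ η * δ
      obtain ⟨η', hεη', hη'ηδ⟩ := wayBelow_interp hcont hεηδ
      refine ⟨δ, hδ1, ?_⟩
      intro B' hB'
      refine ⟨η', hεη', wayBelow_le hη'ηδ
        ((mul_le_mul' hη1.le hδ1.le).trans (le_of_eq (mul_one 1))), ?_⟩
      intro z hz
      obtain ⟨c, hcC, hδcz⟩ := hB' hz
      obtain ⟨x, hxA, hηxc⟩ := hCsub hcC
      refine ⟨x, hxA, wayBelow_le hη'ηδ ?_⟩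
      calc η * δ ≤ d x c * d c z := mul_le_mul' hηxc.le hδcz.le
      _ ≤ d x z := htri x c z
    have hAU : A ∈ U := by
      obtain ⟨η, hεη, hη1⟩ := wayBelow_interp hcont hε
      exact ⟨η, hεη, hη1, fun x hx => ⟨x, hx, wayBelow_le hη1 (hrefl x)⟩⟩
    obtain ⟨η, hεη, _, hBsub⟩ := hspec U hopen hAU
    obtain ⟨x, hxA, hηxy⟩ := hBsub hyB
    exact ⟨x, hxA, wayBelow_le hεη hηxy.le⟩
  · intro hBcl U hUopen hAU
    obtain ⟨δ, hδ1, hsub⟩ := hUopen A hAU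
    apply hsub
    intro y hyB
    exact hBcl hyB δ hδ1
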